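/- arXiv:1309.4510 — 3 statements merged into one kernel-verified Lean document; each statement's English description precedes it below -/
import Mathlib

section
/- Let g_m = ρ_{t^k,t}(h_m) where ρ_{t^k,t} is the algebra homomorphism on symmetric functions sending p_j to ((1-t^{kj})/(1-t^j)) p_j, and h_m is the complete homogeneous symmetric function. Then the coefficient of h_π in the expansion g_m = Σ_π a_π(t) h_π is a_π(t) = Σ_{β} Σ_{0 ≤ a_1 < a_2 < ⋯ < a_ℓ ≤ k-1} t^{a_1 β_1 + ⋯ + a_ℓ β_ℓ}, where ℓ = ℓ(π) is the number of parts of π, the outer sum is over all rearrangements β of π (the S_ℓ-orbit of the sequence of parts of π), and the inner sum over strictly increasing sequences of integers in [0, k-1]. -/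
/-!
Let `H(z) = ∑ h_n z^n` and `P(z) = ∑ p_{i+1} z^i`. Newton's identities say `H' = P H`, and this
equation determines a power series with constant term `1`. For `ρ_c : p_j ↦ c_j p_j`, the series
`ρ_c H` therefore turns sums `c = ∑ c_a` into products, and `c_j = x^j` rescales `H(z)` to `H(xz)`.
As `(1 - t^{kj})/(1 - t^j) = ∑_{a<k} t^{aj}`, this gives `ρ_{t^k,t} H(z) = ∏_{a<k} H(t^a z)`, whose
`z^m`-coefficient is the sum of `t^{∑ a l_a} ∏_a h_{l_a}` over all `l : {0,…,k-1} → ℕ` of total `m`.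
Such an `l` is the same as its support `S` together with the sequence `β` of its (positive) values
read along `S` in increasing order; grouping the pairs `(S, β)` by the partition that `β`
rearranges gives the formula.
-/

open MvPolynomial

noncomputable section

/-- The coefficient field `ℂ(t)`. -/
abbrev K : Type := RatFunc ℂ

/-- The variable `t`. -/
def tt : K := RatFunc.X

/-- The ring of symmetric functions, presented as polynomials in the
power sums `p_1, p_2, …` (the variable `X j` represents `p_j`). -/
abbrev SymFun : Type := MvPolynomial ℕ+ K

/-- `p_μ` for a partition `μ` given by its multiplicity function `d`
(`d j` = number of parts of `μ` equal to `j`). -/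
def pPow (d : ℕ+ →₀ ℕ) : SymFun := monomial d 1

/-- `z(μ) = |Aut μ| ⬝ ∏_j μ_j`. -/
def zPart (d : ℕ+ →₀ ℕ) : ℕ := d.prod fun j m => m.factorial * (j : ℕ) ^ m

/-- The Macdonald bilinear form with parameters `q`, `t`, defined on the
power sum basis by `(p_μ, p_ν) = δ_{μν} z(μ) ∏_j (1-q^{μ_j})/(1-t^{μ_j})`. -/
def macForm (q t : K) (f g : SymFun) : K :=
  ∑ d ∈ f.support ∪ g.support,
    coeff d f * coeff d g *
      ((zPart d : K) * d.prod fun j m => ((1 - q ^ (j : ℕ)) / (1 - t ^ (j : ℕ))) ^ m)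

/-- The power sum `p_{i+1}` as an element of `SymFun`. -/
def pVar (i : ℕ) : SymFun := X (⟨i + 1, Nat.succ_pos i⟩ : ℕ+)

/-- The complete homogeneous symmetric function `h_n`, via Newton's identity
`n h_n = ∑_{i=1}^n p_i h_{n-i}`. -/
def hSym : ℕ → SymFun
  | 0 => 1
  | n + 1 =>
    ((n + 1 : K))⁻¹ • ∑ i ∈ Finset.range (n + 1), pVar i * hSym (n - i)
  decreasing_by omega

/-- `h_n` for an integer index, with `h_n = 0` for `n < 0`. -/
def hZ (n : ℤ) : SymFun := if 0 ≤ n then hSym n.toNat else 0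

/-- Skew Schur function via the Jacobi–Trudi determinant
`s_{λ/μ} = det (h_{λ_i - μ_j - i + j})`. -/
def skewSchur (lam mu : List ℕ) : SymFun :=
  Matrix.det (Matrix.of fun i j : Fin (max lam.length mu.length) =>
    hZ ((lam.getD i 0 : ℤ) - (mu.getD j 0 : ℤ) - (i : ℤ) + (j : ℤ)))

/-- Schur function. -/
def schur (lam : List ℕ) : SymFun := skewSchur lam []

/-- A list of naturals presents a partition iff it is weakly decreasing with
positive entries. -/
def IsPartList (l : List ℕ) : Prop := l.Pairwise (· ≥ ·) ∧ ∀ x ∈ l, 0 < x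


/-- The algebra homomorphism `ρ_{t^k,t} : p_j ↦ ((1-t^{kj})/(1-t^j)) p_j`. -/
def rho (k : ℕ) : SymFun →ₐ[K] SymFun :=
  aeval fun j : ℕ+ => ((1 - tt ^ (k * (j : ℕ))) / (1 - tt ^ (j : ℕ))) • (X j : SymFun)

/-- `h_π = ∏_i h_{π_i}` for a partition `π` given as a multiset of parts. -/
def hProd (π : Multiset ℕ) : SymFun := (π.map hSym).prod

namespace PowerSeries

variable {R S : Type*}

theorem derivative_map [CommSemiring R] [CommSemiring S] (f : R →+* S) (F : R⟦X⟧) :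
    derivative S (map f F) = map f (derivative R F) := by
  ext n
  simp [coeff_derivative]

theorem derivative_rescale [CommSemiring R] (a : R) (F : R⟦X⟧) :
    derivative R (rescale a F) = C a * rescale a (derivative R F) := by
  ext n
  simp only [coeff_derivative, coeff_rescale, coeff_C_mul]
  ring

theorem derivative_prod_of_derivative_eq_mul [CommSemiring R] {ι : Type*}
    (s : Finset ι) {F P : ι → R⟦X⟧} (hF : ∀ i ∈ s, derivative R (F i) = P i * F i) :
    derivative R (∏ i ∈ s, F i) = (∑ i ∈ s, P i) * ∏ i ∈ s, F i := by
  induction s using Finset.cons_induction with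
  | empty => simp
  | cons a s ha ih =>
    rw [Finset.prod_cons, Finset.sum_cons, Derivation.leibniz, smul_eq_mul, smul_eq_mul,
      ih fun i hi => hF i (Finset.mem_cons_of_mem hi), hF a (Finset.mem_cons_self a s)]
    ring

theorem eq_of_derivative_eq_mul [CommRing R] [IsAddTorsionFree R] {P F G : R⟦X⟧}
    (hF : derivative R F = P * F) (hG : derivative R G = P * G)
    (h0 : constantCoeff F = constantCoeff G) : F = G := by
  ext n
  induction n using Nat.strong_induction_on with
  | _ n ih =>
  cases n with
  | zero => simpa using h0
  | succ n =>
    have hlow : coeff n (P * F) = coeff n (P * G) := by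
      simp only [coeff_mul]
      refine Finset.sum_congr rfl fun p hp => ?_
      rw [ih p.2 (by have := Finset.HasAntidiagonal.mem_antidiagonal.mp hp; omega)]
    rw [← hF, ← hG, coeff_derivative, coeff_derivative, mul_comm, mul_comm _ (_ + 1)] at hlow
    exact nsmul_right_injective n.succ_ne_zero (by simpa [nsmul_eq_mul] using hlow)

end PowerSeries

open PowerSeries (derivative rescale)

theorem RatFunc.X_pow_ne_one {F : Type*} [Field F] {n : ℕ} (hn : n ≠ 0) :
    (RatFunc.X : RatFunc F) ^ n ≠ 1 := by
  intro h
  have := congrArg RatFunc.intDegree h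
  rw [← RatFunc.algebraMap_X, ← map_pow, RatFunc.intDegree_polynomial] at this
  simp [hn] at this

theorem Multiset.mem_permutations_toList_toFinset {α : Type*} [DecidableEq α] {s : Multiset α}
    {l : List α} : l ∈ s.toList.permutations.toFinset ↔ (l : Multiset α) = s := by
  rw [List.mem_toFinset, List.mem_permutations, ← Multiset.coe_eq_coe, Multiset.coe_toList]

section SortedSupport

variable {α M : Type*} [LinearOrder α] [Zero M]

def ofSortedSupport (S : Finset α) (β : List M) : α →₀ M :=
  Finsupp.embDomain (S.orderEmbOfFin rfl).toEmbedding
    (Finsupp.equivFunOnFinite.symm fun i => β.getD i 0)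

def sortedValues (l : α →₀ M) : List M := (l.support.sort (· ≤ ·)).map l

theorem ofSortedSupport_sort_getElem (S : Finset α) (β : List M) {i : ℕ}
    (hi : i < (S.sort (· ≤ ·)).length) :
    ofSortedSupport S β (S.sort (· ≤ ·))[i] = β.getD i 0 := by
  rw [Finset.length_sort] at hi
  exact Finsupp.embDomain_apply_self _ _ (⟨i, hi⟩ : Fin S.card)

theorem ofSortedSupport_of_notMem {S : Finset α} (β : List M) {a : α} (ha : a ∉ S) :
    ofSortedSupport S β a = 0 :=
  Finsupp.embDomain_of_notMem_range _ _ _ (by simpa using ha)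

theorem support_ofSortedSupport_subset (S : Finset α) (β : List M) :
    (ofSortedSupport S β).support ⊆ S := fun _ ha =>
  by_contra fun h => Finsupp.mem_support_iff.mp ha (ofSortedSupport_of_notMem β h)

theorem support_ofSortedSupport {S : Finset α} {β : List M} (hS : S.card = β.length)
    (hβ : ∀ x ∈ β, x ≠ 0) : (ofSortedSupport S β).support = S := by
  refine (support_ofSortedSupport_subset S β).antisymm fun a ha => ?_
  obtain ⟨i, hi, rfl⟩ := List.getElem_of_mem ((Finset.mem_sort (· ≤ ·)).mpr ha)
  have hi' : i < β.length := by rwa [Finset.length_sort, hS] at hi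
  rw [Finsupp.mem_support_iff, ofSortedSupport_sort_getElem, List.getD_eq_getElem _ _ hi']
  exact hβ _ (List.getElem_mem hi')

theorem prod_ofSortedSupport {N : Type*} [CommMonoid N] (S : Finset α) (β : List M)
    {g : α → M → N} (hg : ∀ a, g a 0 = 1) :
    (ofSortedSupport S β).prod g = ∏ i : Fin S.card, g (S.orderEmbOfFin rfl i) (β.getD i 0) := by
  rw [ofSortedSupport, Finsupp.prod_embDomain, Finsupp.prod_fintype _ _ fun _ => hg _]
  rfl

theorem sortedValues_ofSortedSupport {S : Finset α} {β : List M} (hS : S.card = β.length)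
    (hβ : ∀ x ∈ β, x ≠ 0) : sortedValues (ofSortedSupport S β) = β := by
  rw [sortedValues, support_ofSortedSupport hS hβ]
  refine List.ext_getElem (by simp [hS]) fun i h _ => ?_
  rw [List.getElem_map, ofSortedSupport_sort_getElem, List.getD_eq_getElem]

theorem ofSortedSupport_sortedValues (l : α →₀ M) :
    ofSortedSupport l.support (sortedValues l) = l := by
  ext a
  by_cases ha : a ∈ l.support
  · obtain ⟨i, hi, rfl⟩ := List.getElem_of_mem ((Finset.mem_sort (· ≤ ·)).mpr ha)
    rw [ofSortedSupport_sort_getElem, sortedValues,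
      List.getD_eq_getElem _ _ (by simpa using hi), List.getElem_map]
  · rw [ofSortedSupport_of_notMem _ ha, Finsupp.notMem_support_iff.mp ha]

theorem coe_sortedValues (l : α →₀ M) :
    (sortedValues l : Multiset M) = l.support.val.map l := by
  rw [sortedValues, ← Multiset.map_coe, Finset.sort_eq]

theorem sum_sortedValues {M : Type*} [AddCommMonoid M] {l : α →₀ M} {s : Finset α}
    (hs : l.support ⊆ s) : (sortedValues l).sum = ∑ a ∈ s, l a := by
  rw [← Multiset.sum_coe, coe_sortedValues]
  exact Finset.sum_subset hs fun a _ ha => Finsupp.notMem_support_iff.mp ha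

theorem length_sortedValues (l : α →₀ M) : (sortedValues l).length = l.support.card := by
  simp [sortedValues]

def partitionOfSortedValues (l : α →₀ ℕ) {m : ℕ} (hl : (sortedValues l).sum = m) :
    Nat.Partition m where
  parts := sortedValues l
  parts_pos hx := by
    rw [coe_sortedValues] at hx
    obtain ⟨a, ha, rfl⟩ := Multiset.mem_map.mp hx
    exact Nat.pos_of_ne_zero (Finsupp.mem_support_iff.mp ha)
  parts_sum := by rw [Multiset.sum_coe, hl]

end SortedSupport

theorem sum_finsuppAntidiag_range_eq_sum_partition {N : Type*} [AddCommMonoid N] (k m : ℕ)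
    (G : (ℕ →₀ ℕ) → N) :
    ∑ l ∈ (Finset.range k).finsuppAntidiag m, G l =
      ∑ π : Nat.Partition m, ∑ β ∈ π.parts.toList.permutations.toFinset,
        ∑ S ∈ Finset.powersetCard β.length (Finset.range k), G (ofSortedSupport S β) := by
  simp_rw [Finset.sum_sigma']
  have mem_iff : ∀ {π : Nat.Partition m} {β : List ℕ} {S : Finset ℕ},
      β ∈ π.parts.toList.permutations.toFinset ∧
          S ∈ Finset.powersetCard β.length (Finset.range k) ↔
        (β : Multiset ℕ) = π.parts ∧ S ⊆ Finset.range k ∧ S.card = β.length := by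
    intro π β S
    rw [Multiset.mem_permutations_toList_toFinset, Finset.mem_powersetCard]
  have pos : ∀ {π : Nat.Partition m} {β : List ℕ}, (β : Multiset ℕ) = π.parts → ∀ x ∈ β, x ≠ 0 :=
    fun {π} _ h x hx => (π.parts_pos (h ▸ Multiset.mem_coe.mpr hx)).ne'
  have sum_eq : ∀ {l : ℕ →₀ ℕ}, l ∈ (Finset.range k).finsuppAntidiag m →
      (sortedValues l).sum = m := fun hl => by
    rw [sum_sortedValues (Finset.mem_finsuppAntidiag.mp hl).2]
    exact (Finset.mem_finsuppAntidiag.mp hl).1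
  refine (Finset.sum_bij' (fun x _ => ofSortedSupport x.2.2 x.2.1)
    (fun l hl => ⟨partitionOfSortedValues l (sum_eq hl), sortedValues l, l.support⟩)
    ?_ ?_ ?_ ?_ fun _ _ => rfl).symm
  · rintro ⟨π, β, S⟩ hx
    simp only [Finset.mem_sigma, Finset.mem_univ, true_and] at hx
    obtain ⟨hβ, hSk, hS⟩ := mem_iff.mp hx
    have hsub := (support_ofSortedSupport_subset S β).trans hSk
    refine Finset.mem_finsuppAntidiag.mpr ⟨?_, hsub⟩
    rw [← sum_sortedValues hsub, sortedValues_ofSortedSupport hS (pos hβ),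
      ← Multiset.sum_coe, hβ, π.parts_sum]
  · intro l hl
    simp only [Finset.mem_sigma, Finset.mem_univ, true_and]
    exact mem_iff.mpr ⟨rfl, (Finset.mem_finsuppAntidiag.mp hl).2, (length_sortedValues l).symm⟩
  · rintro ⟨π, β, S⟩ hx
    simp only [Finset.mem_sigma, Finset.mem_univ, true_and] at hx
    obtain ⟨hβ, -, hS⟩ := mem_iff.mp hx
    have hsupp := support_ofSortedSupport hS (pos hβ)
    have hvals := sortedValues_ofSortedSupport hS (pos hβ)
    refine Sigma.ext (Nat.Partition.ext ?_) (heq_of_eq ?_)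
    · simp [partitionOfSortedValues, hvals, hβ]
    · simp [hvals, hsupp]
  · exact fun l _ => ofSortedSupport_sortedValues l

def scalePowerSums (c : ℕ+ → K) : SymFun →ₐ[K] SymFun := aeval fun j => c j • X j

theorem scalePowerSums_pVar (c : ℕ+ → K) (i : ℕ) :
    scalePowerSums c (pVar i) = c i.succPNat • pVar i :=
  aeval_X _ _

theorem rho_eq_scalePowerSums (k : ℕ) :
    rho k = scalePowerSums (∑ a ∈ Finset.range k, fun j => (tt ^ a) ^ (j : ℕ)) := by
  refine congrArg aeval (funext fun j => congrArg (· • _) ?_)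
  have hj : tt ^ (j : ℕ) ≠ 1 := RatFunc.X_pow_ne_one j.ne_zero
  simp_rw [Finset.sum_apply, ← pow_mul, mul_comm _ (j : ℕ), pow_mul, geom_sum_eq hj, ← pow_mul,
    mul_comm (j : ℕ) k]
  rw [div_eq_div_iff (sub_ne_zero.mpr hj.symm) (sub_ne_zero.mpr hj)]
  ring

def hGen : PowerSeries SymFun := PowerSeries.mk hSym

def pGen : PowerSeries SymFun := PowerSeries.mk pVar

theorem derivative_hGen : derivative SymFun hGen = pGen * hGen := by
  refine PowerSeries.ext fun n => ?_
  have hn : (n + 1 : K) ≠ 0 := n.cast_add_one_ne_zero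
  rw [PowerSeries.coeff_derivative, PowerSeries.coeff_mul,
    Finset.Nat.sum_antidiagonal_eq_sum_range_succ_mk]
  simp only [hGen, pGen, PowerSeries.coeff_mk]
  rw [mul_comm, ← map_natCast (algebraMap K SymFun), ← map_one (algebraMap K SymFun), ← map_add,
    ← Algebra.smul_def, hSym, smul_smul, mul_inv_cancel₀ hn, one_smul]

def hSeries (c : ℕ+ → K) : PowerSeries SymFun := PowerSeries.map (scalePowerSums c).toRingHom hGen

def pSeries (c : ℕ+ → K) : PowerSeries SymFun := PowerSeries.map (scalePowerSums c).toRingHom pGen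

theorem coeff_hSeries (c : ℕ+ → K) (n : ℕ) :
    PowerSeries.coeff n (hSeries c) = scalePowerSums c (hSym n) := by
  simp [hSeries, hGen]

theorem coeff_pSeries (c : ℕ+ → K) (n : ℕ) :
    PowerSeries.coeff n (pSeries c) = c n.succPNat • pVar n := by
  simp [pSeries, pGen, scalePowerSums_pVar]

theorem derivative_hSeries (c : ℕ+ → K) :
    derivative SymFun (hSeries c) = pSeries c * hSeries c := by
  rw [hSeries, PowerSeries.derivative_map, derivative_hGen, map_mul, ← hSeries, pSeries]

theorem constantCoeff_hSeries (c : ℕ+ → K) : PowerSeries.constantCoeff (hSeries c) = 1 := by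
  simp [← PowerSeries.coeff_zero_eq_constantCoeff_apply, coeff_hSeries, hSym]

theorem hSeries_sum {ι : Type*} (s : Finset ι) (c : ι → ℕ+ → K) :
    hSeries (∑ i ∈ s, c i) = ∏ i ∈ s, hSeries (c i) := by
  have hp : pSeries (∑ i ∈ s, c i) = ∑ i ∈ s, pSeries (c i) := by
    refine PowerSeries.ext fun n => ?_
    simp only [coeff_pSeries, map_sum]
    rw [Finset.sum_apply, Finset.sum_smul]
  refine PowerSeries.eq_of_derivative_eq_mul (derivative_hSeries _) ?_ ?_
  · rw [hp]
    exact PowerSeries.derivative_prod_of_derivative_eq_mul s fun i _ => derivative_hSeries (c i)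
  · rw [constantCoeff_hSeries, map_prod]
    exact (Finset.prod_eq_one fun i _ => constantCoeff_hSeries (c i)).symm

theorem hSeries_pow (x : K) :
    hSeries (fun j => x ^ (j : ℕ)) = rescale (algebraMap K SymFun x) hGen := by
  have hp : pSeries (fun j => x ^ (j : ℕ)) =
      PowerSeries.C (algebraMap K SymFun x) * rescale (algebraMap K SymFun x) pGen := by
    refine PowerSeries.ext fun n => ?_
    simp [coeff_pSeries, pGen, Algebra.smul_def, pow_succ', mul_assoc]
  refine PowerSeries.eq_of_derivative_eq_mul (derivative_hSeries _) ?_ ?_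
  · rw [PowerSeries.derivative_rescale, derivative_hGen, map_mul, hp, mul_assoc]
  · rw [constantCoeff_hSeries, ← PowerSeries.coeff_zero_eq_constantCoeff_apply,
      PowerSeries.coeff_rescale, hGen, PowerSeries.coeff_mk, pow_zero, one_mul, hSym]

theorem rho_hSym_eq_sum_finsuppAntidiag (k m : ℕ) :
    rho k (hSym m) = ∑ l ∈ (Finset.range k).finsuppAntidiag m,
      l.prod fun a n => tt ^ (a * n) • hSym n := by
  rw [rho_eq_scalePowerSums, ← coeff_hSeries, hSeries_sum, PowerSeries.coeff_prod]
  refine Finset.sum_congr rfl fun l hl => ?_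
  rw [Finsupp.prod_of_support_subset _ (Finset.mem_finsuppAntidiag.mp hl).2 _ (by simp [hSym])]
  refine Finset.prod_congr rfl fun a _ => ?_
  rw [hSeries_pow, PowerSeries.coeff_rescale, hGen, PowerSeries.coeff_mk, ← map_pow,
    ← Algebra.smul_def, ← pow_mul]

theorem prod_ofSortedSupport_eq_smul_hProd {S : Finset ℕ} {β : List ℕ} (hS : S.card = β.length) :
    (ofSortedSupport S β).prod (fun a n => tt ^ (a * n) • hSym n) =
      tt ^ (∑ i ∈ Finset.range β.length, (S.sort (· ≤ ·)).getD i 0 * β.getD i 0) •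
        hProd β := by
  rw [prod_ofSortedSupport _ _ (by simp [hSym]), Finset.prod_smul, Finset.prod_pow_eq_pow_sum]
  congr 1
  · rw [← hS, ← Fin.sum_univ_eq_sum_range (fun i => (S.sort (· ≤ ·)).getD i 0 * β.getD i 0)]
    refine congrArg _ (Finset.sum_congr rfl fun i _ => ?_)
    rw [Finset.orderEmbOfFin_apply, List.getD_eq_getElem (S.sort (· ≤ ·)) 0 (by simp)]
    rfl
  · rw [hProd, Multiset.map_coe, Multiset.prod_coe, ← Fin.prod_univ_fun_getElem,
      Fin.prod_univ_eq_prod_range (fun i => hSym (β.getD i 0)), hS,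
      ← Fin.prod_univ_eq_prod_range (fun i => hSym (β.getD i 0))]
    simp

theorem g_m_expansion_in_h_basis_general (k : ℕ) (m : ℕ) :
    rho k (hSym m) =
      ∑ π : Nat.Partition m,
        (∑ β ∈ π.parts.toList.permutations.toFinset,
          ∑ S ∈ Finset.powersetCard β.length (Finset.range k),
            tt ^ (∑ i ∈ Finset.range β.length,
              (S.sort (· ≤ ·)).getD i 0 * β.getD i 0))
          • hProd π.parts := by
  rw [rho_hSym_eq_sum_finsuppAntidiag, sum_finsuppAntidiag_range_eq_sum_partition]
  refine Finset.sum_congr rfl fun π _ => ?_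
  rw [Finset.sum_smul]
  refine Finset.sum_congr rfl fun β hβ => ?_
  rw [Finset.sum_smul, ← Multiset.mem_permutations_toList_toFinset.mp hβ]
  exact Finset.sum_congr rfl fun S hS =>
    prod_ofSortedSupport_eq_smul_hProd (Finset.mem_powersetCard.mp hS).2

/-- Writing `g_m = ρ_{t^k,t}(h_m)`, its expansion in the basis
`{h_π}_{π ⊢ m}` is `g_m = ∑_π a_π(t) h_π` with
`a_π(t) = ∑_β ∑_{0 ≤ a_1 < ⋯ < a_ℓ ≤ k-1} t^{a_1β_1 + ⋯ + a_ℓβ_ℓ}`, the outer sum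
over all rearrangements `β` of the parts of `π` (`ℓ = ℓ(π)`), the inner sum over
strictly increasing sequences in `[0, k-1]` (realized as subsets `S ⊆ {0,…,k-1}`
of size `ℓ` listed in increasing order). -/
theorem g_m_expansion_in_h_basis (k : ℕ) (hk : 1 ≤ k) (m : ℕ) :
    rho k (hSym m) =
      ∑ π : Nat.Partition m,
        (∑ β ∈ π.parts.toList.permutations.toFinset,
          ∑ S ∈ Finset.powersetCard β.length (Finset.range k),
            tt ^ (∑ i ∈ Finset.range β.length,
              (S.sort (· ≤ ·)).getD i 0 * β.getD i 0))
          • hProd π.parts :=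
  g_m_expansion_in_h_basis_general k m

end
end

section
/- For positive integers k, m, n, the identity (h_n^* ∘ (multiplication by h_m)) = Σ_{l ≥ 0} binom(k+l-1, l)_t (multiplication by h_{m-l}) ∘ h_{n-l}^* holds as operators on Λ_{t^k,t}, where h_j^* denotes the adjoint of multiplication by h_j with respect to the Macdonald inner product at q = t^k, and binom(k+l-1, l)_t is the Gaussian binomial coefficient. -/
open MvPolynomial

noncomputable section

/-!
For the Macdonald form at `q = t^k` the monomials `p_μ` in the power sums are orthogonal, with
`⟨p_μ, p_μ⟩ = z(μ) ∏ⱼ ρⱼ^{mⱼ} = ∏ⱼ mⱼ! (j ρⱼ)^{mⱼ}` where `ρⱼ = (1 - t^{kj})/(1 - t^j)`. Hence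
adjoints of multiplication operators are unique and multiplicative in the multiplier, and the
adjoint of multiplication by `pⱼ` is the derivation `j ρⱼ ∂/∂pⱼ`. As `∂h_m/∂pⱼ = h_{m-j}/j`,
commuting `pⱼ^*` past multiplication by `h_m` produces `ρⱼ h_{m-j}`. Newton's identity
`(n+1) h_{n+1} = ∑_{i+r=n} p_{i+1} h_r` then proves the theorem by induction on `n`. The scalars
collect into `(s+1) binom(k+s, s+1)_t = ∑_{i+l=s} ρ_{i+1} binom(k+l-1, l)_t`, which is the
logarithmic derivative of Cauchy's `q`-binomial theorem.
-/

namespace Finset.Nat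

theorem sum_antidiagonal_antidiagonal_assoc {M : Type*} [AddCommMonoid M] (n : ℕ)
    (f : ℕ → ℕ → ℕ → M) :
    ∑ p ∈ antidiagonal n, ∑ q ∈ antidiagonal p.2, f p.1 q.1 q.2 =
      ∑ p ∈ antidiagonal n, ∑ q ∈ antidiagonal p.1, f q.1 q.2 p.2 := by
  simp only [Finset.sum_sigma']
  apply Finset.sum_nbij' (fun x ↦ ⟨(x.1.1 + x.2.1, x.2.2), (x.1.1, x.2.1)⟩)
    (fun x ↦ ⟨(x.2.1, x.2.2 + x.1.2), (x.2.2, x.1.2)⟩) <;>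
    aesop (add simp [add_assoc])

theorem sum_antidiagonal_antidiagonal_comm {M : Type*} [AddCommMonoid M] (n : ℕ)
    (f : ℕ → ℕ → ℕ → M) :
    ∑ p ∈ antidiagonal n, ∑ q ∈ antidiagonal p.2, f p.1 q.1 q.2 =
      ∑ p ∈ antidiagonal n, ∑ q ∈ antidiagonal p.2, f q.1 p.1 q.2 := by
  simp only [Finset.sum_sigma']
  apply Finset.sum_nbij' (fun x ↦ ⟨(x.2.1, x.1.1 + x.2.2), (x.1.1, x.2.2)⟩)
    (fun x ↦ ⟨(x.2.1, x.1.1 + x.2.2), (x.1.1, x.2.2)⟩) <;>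
    aesop (add simp [add_left_comm])

theorem add_one_smul_sum_antidiagonal_succ {R M : Type*} [Semiring R] [AddCommMonoid M]
    [Module R M] (n : ℕ) (f : ℕ × ℕ → M) :
    ((n : R) + 1) • ∑ p ∈ antidiagonal (n + 1), f p =
      ∑ p ∈ antidiagonal n, ((p.1 : R) + 1) • f (p.1 + 1, p.2) +
        ∑ p ∈ antidiagonal n, ((p.2 : R) + 1) • f (p.1, p.2 + 1) := by
  calc ((n : R) + 1) • ∑ p ∈ antidiagonal (n + 1), f p
      = ∑ p ∈ antidiagonal (n + 1), ((p.1 : R) • f p + (p.2 : R) • f p) := by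
        rw [smul_sum]
        refine sum_congr rfl fun p hp ↦ ?_
        rw [← add_smul, ← Nat.cast_add, HasAntidiagonal.mem_antidiagonal.1 hp, Nat.cast_succ]
    _ = _ := by
        rw [sum_add_distrib, sum_antidiagonal_succ, sum_antidiagonal_succ']
        simp

end Finset.Nat

namespace LinearMap.IsAdjointPair

variable {R M : Type*} [CommRing R] [AddCommGroup M] [Module R M] {B : LinearMap.BilinForm R M}

theorem sum {ι : Type*} (s : Finset ι) {f g : ι → Module.End R M}
    (h : ∀ i ∈ s, IsAdjointPair B B (f i) (g i)) :
    IsAdjointPair B B (∑ i ∈ s, f i : Module.End R M) (∑ i ∈ s, g i : Module.End R M) := by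
  intro x y
  simp only [LinearMap.sum_apply, map_sum]
  exact Finset.sum_congr rfl fun i hi ↦ h i hi x y

theorem eq_of_separatingLeft (hB : B.SeparatingLeft) {f f' g : Module.End R M}
    (h : IsAdjointPair B B f g) (h' : IsAdjointPair B B f' g) : f = f' := by
  ext x
  rw [← sub_eq_zero]
  exact hB _ fun y ↦ by rw [map_sub₂, h, h', sub_self]

end LinearMap.IsAdjointPair

namespace MvPolynomial

variable {σ R : Type*} [CommSemiring R] (c : σ → R)

def fockWeight (d : σ →₀ ℕ) : R := d.prod fun j m ↦ m.factorial * c j ^ m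

theorem fockWeight_add_single (d : σ →₀ ℕ) (j : σ) :
    fockWeight c (d + Finsupp.single j 1) = (d j + 1) * c j * fockWeight c d := by
  have hg : ∀ i : σ, (Nat.factorial 0 : R) * c i ^ 0 = 1 := by simp
  rw [fockWeight, fockWeight, ← Finsupp.mul_prod_erase' _ j _ hg,
    ← Finsupp.mul_prod_erase' d j _ hg, Finsupp.erase_add, Finsupp.erase_single, add_zero,
    Finsupp.add_apply, Finsupp.single_eq_same, Nat.factorial_succ]
  push_cast
  ring

theorem fockWeight_ne_zero [IsDomain R] [CharZero R] {c : σ → R} (hc : ∀ j, c j ≠ 0)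
    (d : σ →₀ ℕ) : fockWeight c d ≠ 0 :=
  Finsupp.prod_ne_zero_iff.2 fun j _ ↦
    mul_ne_zero (Nat.cast_ne_zero.2 (Nat.factorial_ne_zero _)) (pow_ne_zero _ (hc j))

theorem sum_support_coeff_mul_of_subset (f : MvPolynomial σ R) {s : Finset (σ →₀ ℕ)}
    (hs : f.support ⊆ s) (φ : (σ →₀ ℕ) → R) :
    ∑ d ∈ f.support, coeff d f * φ d = ∑ d ∈ s, coeff d f * φ d :=
  Finset.sum_subset hs fun d _ hd ↦ by rw [notMem_support_iff.1 hd, zero_mul]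

def fockForm : LinearMap.BilinForm R (MvPolynomial σ R) :=
  LinearMap.mk₂ R (fun f g ↦ ∑ d ∈ f.support, coeff d f * (coeff d g * fockWeight c d))
    (fun f f' g ↦ by
      classical
      rw [sum_support_coeff_mul_of_subset (f + f') support_add,
        sum_support_coeff_mul_of_subset f Finset.subset_union_left,
        sum_support_coeff_mul_of_subset f' Finset.subset_union_right, ← Finset.sum_add_distrib]
      simp only [coeff_add, add_mul])
    (fun a f g ↦ by
      rw [sum_support_coeff_mul_of_subset (a • f) support_smul, smul_eq_mul, Finset.mul_sum]
      simp only [coeff_smul, smul_eq_mul, mul_assoc])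
    (fun f g g' ↦ by simp only [coeff_add, add_mul, mul_add, Finset.sum_add_distrib])
    (fun a f g ↦ by
      simp only [coeff_smul, smul_eq_mul, Finset.mul_sum]
      exact Finset.sum_congr rfl fun _ _ ↦ by ring)

theorem fockForm_apply (f g : MvPolynomial σ R) :
    fockForm c f g = ∑ d ∈ f.support, coeff d f * (coeff d g * fockWeight c d) := rfl

theorem fockForm_monomial_right (f : MvPolynomial σ R) (d : σ →₀ ℕ) (b : R) :
    fockForm c f (monomial d b) = coeff d f * b * fockWeight c d := by
  classical
  rw [fockForm_apply, sum_support_coeff_mul_of_subset f (Finset.subset_insert d f.support),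
    Finset.sum_eq_single_of_mem d (Finset.mem_insert_self d _) fun e _ he ↦ by
      rw [coeff_monomial, if_neg (Ne.symm he), zero_mul, mul_zero],
    coeff_monomial, if_pos rfl, mul_assoc]

theorem fockForm_separatingLeft [IsDomain R] [CharZero R] {c : σ → R} (hc : ∀ j, c j ≠ 0) :
    (fockForm c).SeparatingLeft := by
  intro f hf
  ext d
  simpa [fockForm_monomial_right, fockWeight_ne_zero hc] using hf (monomial d 1)

theorem isAdjointPair_smul_pderiv_lmul_X (j : σ) :
    LinearMap.IsAdjointPair (fockForm c) (fockForm c)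
      (c j • (pderiv j).toLinearMap : Module.End R (MvPolynomial σ R))
      (Algebra.lmul R (MvPolynomial σ R) (X j)) := by
  intro f g
  induction g using MvPolynomial.induction_on' with
  | monomial e b =>
    rw [LinearMap.smul_apply, Derivation.coeFn_coe, Algebra.coe_lmul_eq_mul,
      LinearMap.mul_apply', X, monomial_mul, one_mul, add_comm, fockForm_monomial_right,
      fockForm_monomial_right, fockWeight_add_single, coeff_smul, coeff_pderiv, smul_eq_mul]
    ring
  | add g g' hg hg' => simp only [map_add, hg, hg']

end MvPolynomial

namespace PowerSeries

variable {R : Type*} [CommSemiring R]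

theorem derivative_mk_pow (a : R) :
    d⁄dX R (mk (a ^ ·)) = mk (fun n ↦ a ^ (n + 1)) * mk (a ^ ·) := by
  ext n
  rw [coeff_derivative, coeff_mul, Finset.sum_congr rfl fun p hp ↦ by
      rw [coeff_mk, coeff_mk, ← pow_add, add_right_comm,
        Finset.HasAntidiagonal.mem_antidiagonal.1 hp],
    Finset.sum_const, Finset.Nat.card_antidiagonal, coeff_mk, nsmul_eq_mul]
  push_cast
  ring

theorem derivative_prod_mk_pow {ι : Type*} (s : Finset ι) (a : ι → R) :
    d⁄dX R (∏ i ∈ s, mk (a i ^ ·)) =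
      (∑ i ∈ s, mk fun n ↦ a i ^ (n + 1)) * ∏ i ∈ s, mk (a i ^ ·) := by
  induction s using Finset.cons_induction with
  | empty => simp
  | cons i s hi ih =>
    rw [Finset.prod_cons, Finset.sum_cons, Derivation.leibniz, ih, derivative_mk_pow,
      smul_eq_mul, smul_eq_mul]
    ring

end PowerSeries

section GaussBinom

open Finset PowerSeries

variable {F : Type*} [Field F] {t : F}

/-- The Gaussian binomial coefficient `binom(k+l-1, l)_t`. -/
def gaussBinom (t : F) (k l : ℕ) : F :=
  ∏ i ∈ range l, (1 - t ^ (k + i)) / (1 - t ^ (i + 1))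

theorem gaussBinom_zero_right (k : ℕ) : gaussBinom t k 0 = 1 := prod_range_zero _

theorem gaussBinom_zero_succ (l : ℕ) : gaussBinom t 0 (l + 1) = 0 :=
  prod_eq_zero (mem_range.2 l.succ_pos) (by simp)

theorem gaussBinom_succ_right (k l : ℕ) :
    gaussBinom t k (l + 1) = gaussBinom t k l * ((1 - t ^ (k + l)) / (1 - t ^ (l + 1))) :=
  prod_range_succ _ l

theorem one_sub_pow_ne_zero_of_not_isOfFinOrder (ht : ¬IsOfFinOrder t) {n : ℕ} (hn : n ≠ 0) :
    1 - t ^ n ≠ 0 :=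
  sub_ne_zero.2 fun h ↦ ht (isOfFinOrder_iff_pow_eq_one.2 ⟨n, Nat.pos_of_ne_zero hn, h.symm⟩)

theorem gaussBinom_succ_mul (ht : ¬IsOfFinOrder t) (k l : ℕ) :
    gaussBinom t k (l + 1) * (1 - t ^ (l + 1)) = (1 - t ^ k) * gaussBinom t (k + 1) l := by
  induction l with
  | zero =>
    rw [gaussBinom_succ_right, gaussBinom_zero_right, gaussBinom_zero_right, one_mul, mul_one,
      add_zero, zero_add]
    exact div_mul_cancel₀ _ (one_sub_pow_ne_zero_of_not_isOfFinOrder ht one_ne_zero)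
  | succ l ih =>
    rw [gaussBinom_succ_right k (l + 1), gaussBinom_succ_right (k + 1) l, ← mul_assoc, ← ih]
    field_simp [one_sub_pow_ne_zero_of_not_isOfFinOrder ht l.succ_ne_zero,
      one_sub_pow_ne_zero_of_not_isOfFinOrder ht (l + 1).succ_ne_zero]
    ring

theorem gaussBinom_succ_succ (ht : ¬IsOfFinOrder t) (k l : ℕ) :
    gaussBinom t (k + 1) (l + 1) = gaussBinom t k (l + 1) + t ^ k * gaussBinom t (k + 1) l := by
  have h := one_sub_pow_ne_zero_of_not_isOfFinOrder ht l.succ_ne_zero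
  rw [← mul_left_inj' h, add_mul, gaussBinom_succ_mul ht k l, gaussBinom_succ_right (k + 1) l]
  field_simp
  ring

/-- Cauchy's `q`-binomial theorem `∏_{i<k} (1 - tⁱX)⁻¹ = ∑ₗ binom(k+l-1, l)_t Xˡ`. -/
theorem coeff_prod_mk_pow (ht : ¬IsOfFinOrder t) (k l : ℕ) :
    coeff l (∏ i ∈ range k, mk ((t ^ i) ^ ·)) = gaussBinom t k l := by
  induction k generalizing l with
  | zero => cases l <;> simp [PowerSeries.coeff_one, gaussBinom_zero_right, gaussBinom_zero_succ]
  | succ k ihk =>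
    rw [prod_range_succ, PowerSeries.coeff_mul]
    induction l with
    | zero => simp [ihk, gaussBinom_zero_right]
    | succ l ihl =>
      rw [Nat.sum_antidiagonal_succ', gaussBinom_succ_succ ht, ← ihl, mul_sum]
      simp only [ihk, coeff_mk, pow_zero, mul_one, pow_succ]
      congr 1
      exact sum_congr rfl fun _ _ ↦ by ring

theorem succ_mul_gaussBinom_succ (ht : ¬IsOfFinOrder t) (k s : ℕ) :
    (s + 1 : F) * gaussBinom t k (s + 1) =
      ∑ p ∈ antidiagonal s,
        (1 - (t ^ k) ^ (p.1 + 1)) / (1 - t ^ (p.1 + 1)) * gaussBinom t k p.2 := by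
  have h := congrArg (coeff s) (derivative_prod_mk_pow (range k) (t ^ ·))
  rw [coeff_derivative, PowerSeries.coeff_mul, coeff_prod_mk_pow ht, mul_comm] at h
  rw [h]
  refine sum_congr rfl fun p _ ↦ ?_
  have hne : t ^ (p.1 + 1) ≠ 1 := fun h ↦
    one_sub_pow_ne_zero_of_not_isOfFinOrder ht p.1.succ_ne_zero (by rw [h, sub_self])
  rw [coeff_prod_mk_pow ht, map_sum]
  simp_rw [coeff_mk, ← pow_mul, mul_comm _ (p.1 + 1), pow_mul]
  rw [geom_sum_eq hne, ← neg_div_neg_eq, neg_sub, neg_sub]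

end GaussBinom

namespace SymFun

open Finset LinearMap

theorem not_isOfFinOrder_tt : ¬IsOfFinOrder tt := by
  rw [isOfFinOrder_iff_pow_eq_one]
  rintro ⟨n, hn, h⟩
  have : (Polynomial.X : Polynomial ℂ) ^ n = 1 :=
    RatFunc.algebraMap_injective ℂ (by simpa [tt, RatFunc.algebraMap_X] using h)
  simpa [hn.ne'] using congrArg Polynomial.natDegree this

def macRatio (k j : ℕ) : K := (1 - (tt ^ k) ^ j) / (1 - tt ^ j)

theorem macRatio_ne_zero {k : ℕ} (hk : 1 ≤ k) {j : ℕ} (hj : j ≠ 0) : macRatio k j ≠ 0 := by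
  rw [macRatio, ← pow_mul]
  exact div_ne_zero (one_sub_pow_ne_zero_of_not_isOfFinOrder not_isOfFinOrder_tt (by positivity))
    (one_sub_pow_ne_zero_of_not_isOfFinOrder not_isOfFinOrder_tt hj)

def macdonaldForm (k : ℕ) : LinearMap.BilinForm K SymFun :=
  fockForm fun j : ℕ+ ↦ (j : K) * macRatio k j

theorem macForm_eq_macdonaldForm (k : ℕ) (f g : SymFun) :
    macForm (tt ^ k) tt f g = macdonaldForm k f g := by
  rw [macForm, macdonaldForm, fockForm_apply,
    sum_support_coeff_mul_of_subset f (subset_union_left (s₂ := g.support))]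
  refine sum_congr rfl fun d _ ↦ ?_
  rw [mul_assoc, zPart, Nat.cast_finsuppProd, fockWeight, ← Finsupp.prod_mul]
  congr 2
  refine Finsupp.prod_congr fun j _ ↦ ?_
  rw [macRatio, mul_pow, ← pow_mul]
  push_cast
  ring

theorem macdonaldForm_separatingLeft {k : ℕ} (hk : 1 ≤ k) :
    (macdonaldForm k).SeparatingLeft :=
  fockForm_separatingLeft fun j ↦ mul_ne_zero (by simp) (macRatio_ne_zero hk j.ne_zero)

theorem hZ_natCast (n : ℕ) : hZ n = hSym n := by simp [hZ]

theorem hZ_of_neg {a : ℤ} (ha : a < 0) : hZ a = 0 := if_neg ha.not_ge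

theorem hZ_zero : hZ 0 = 1 := by rw [← Nat.cast_zero, hZ_natCast, hSym]

theorem pVar_eq_X (i : ℕ) : pVar i = X i.succPNat := rfl

theorem hSym_succ_newton (n : ℕ) :
    ((n : K) + 1) • hSym (n + 1) = ∑ p ∈ antidiagonal n, pVar p.1 * hSym p.2 := by
  rw [hSym, smul_smul, mul_inv_cancel₀ (by exact_mod_cast n.succ_ne_zero), one_smul,
    Nat.sum_antidiagonal_eq_sum_range_succ (fun i j ↦ pVar i * hSym j)]

/-- Since `h` vanishes at negative indices, any range of summation that is long enough will do. -/
theorem hZ_newton (N : ℕ) {a : ℤ} (ha : a ≤ N) :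
    (a : K) • hZ a = ∑ i ∈ range N, pVar i * hZ (a - (i + 1)) := by
  rcases le_or_gt a 0 with ha0 | ha0
  · rw [sum_eq_zero fun i _ ↦ by rw [hZ_of_neg (by omega), mul_zero]]
    rcases ha0.lt_or_eq with ha0 | rfl
    · rw [hZ_of_neg ha0, smul_zero]
    · rw [Int.cast_zero, zero_smul]
  obtain ⟨n, rfl⟩ : ∃ n : ℕ, a = n + 1 := ⟨(a - 1).toNat, by omega⟩
  rw [← Nat.cast_succ, hZ_natCast, Int.cast_natCast, Nat.cast_succ, hSym_succ_newton,
    Nat.sum_antidiagonal_eq_sum_range_succ (fun i j ↦ pVar i * hSym j),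
    ← sum_subset (range_subset_range.2 (by omega : n + 1 ≤ N))]
  · refine sum_congr rfl fun i hi ↦ ?_
    have hi : i ≤ n := Nat.lt_succ_iff.1 (mem_range.1 hi)
    rw [show ((n + 1 : ℕ) : ℤ) - (i + 1) = (n - i : ℕ) by omega, hZ_natCast]
  · intro i _ hi
    rw [hZ_of_neg (by simp at hi; omega), mul_zero]

theorem sum_pderiv_pVar_mul (i : ℕ) {N : ℕ} (hi : i < N) (g : ℕ → SymFun) :
    ∑ l ∈ range N, pderiv i.succPNat (pVar l) * g l = g i := by
  rw [sum_eq_single_of_mem i (mem_range.2 hi) fun l _ hl ↦ by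
    rw [pVar_eq_X, pderiv_X_of_ne fun h ↦ hl (Nat.succPNat_inj.1 h), zero_mul]]
  exact (congrArg (· * g i) (pderiv_X_self _)).trans (one_mul _)

theorem pderiv_hZ (i : ℕ) (a : ℤ) :
    pderiv i.succPNat (hZ a) = ((i : K) + 1)⁻¹ • hZ (a - (i + 1)) := by
  suffices ∀ N : ℕ, ∀ a : ℤ, a ≤ N →
      pderiv i.succPNat (hZ a) = ((i : K) + 1)⁻¹ • hZ (a - (i + 1)) from
    this a.toNat a (Int.self_le_toNat a)
  intro N
  induction N with
  | zero =>
    intro a ha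
    rcases ha.lt_or_eq with ha | rfl
    · rw [hZ_of_neg ha, hZ_of_neg (by omega), map_zero, smul_zero]
    · rw [Nat.cast_zero, hZ_zero, hZ_of_neg (by omega), pderiv_one, smul_zero]
  | succ N ih =>
    intro a ha
    rcases Int.lt_or_le a (N + 1) with ha' | ha'
    · exact ih a (by omega)
    have ha0 : (a : K) ≠ 0 := by exact_mod_cast (show a ≠ 0 by omega)
    have hi0 : (i : K) + 1 ≠ 0 := by exact_mod_cast i.succ_ne_zero
    -- differentiate Newton's identity for `hₐ`, then use it again for `h_{a-i-1}`
    refine smul_right_injective SymFun ha0 ?_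
    dsimp only
    rw [← Derivation.map_smul, hZ_newton (N + 1 + i) (by omega), map_sum]
    simp only [pderiv_mul, sum_add_distrib]
    rw [sum_pderiv_pVar_mul i (by omega), sum_congr rfl fun l _ ↦ by
        rw [ih _ (by omega), mul_smul_comm, sub_right_comm],
      ← smul_sum, ← hZ_newton (N + 1 + i) (a := a - (i + 1)) (by omega), smul_smul, smul_smul]
    nth_rewrite 1 [← one_smul K (hZ (a - (i + 1)))]
    rw [← add_smul]
    congr 1
    push_cast
    field_simp
    ring

def pVarAdjoint (k i : ℕ) : Module.End K SymFun :=
  (((i : K) + 1) * macRatio k (i + 1)) • (pderiv i.succPNat).toLinearMap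

theorem isAdjointPair_pVarAdjoint (k i : ℕ) :
    IsAdjointPair (macdonaldForm k) (macdonaldForm k) (pVarAdjoint k i)
      (Algebra.lmul K SymFun (pVar i)) := by
  simpa [pVarAdjoint, macdonaldForm, pVar_eq_X] using
    isAdjointPair_smul_pderiv_lmul_X (fun j : ℕ+ ↦ (j : K) * macRatio k j) i.succPNat

theorem pVarAdjoint_hZ_mul (k i : ℕ) (a : ℤ) (f : SymFun) :
    pVarAdjoint k i (hZ a * f) =
      macRatio k (i + 1) • (hZ (a - (i + 1)) * f) + hZ a * pVarAdjoint k i f := by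
  have hi : (i : K) + 1 ≠ 0 := by exact_mod_cast i.succ_ne_zero
  simp only [pVarAdjoint, LinearMap.smul_apply, Derivation.coeFn_coe, pderiv_mul, pderiv_hZ,
    smul_add, smul_mul_assoc, smul_smul, mul_smul_comm]
  rw [mul_right_comm, mul_inv_cancel₀ hi, one_mul]

theorem sum_antidiagonal_macRatio_mul_gaussBinom_smul {M : Type*} [AddCommMonoid M] [Module K M]
    (k n : ℕ) (Y : ℕ → ℕ → M) :
    ∑ p ∈ antidiagonal n, ∑ q ∈ antidiagonal p.2,
        (macRatio k (p.1 + 1) * gaussBinom tt k q.1) • Y (q.1 + p.1 + 1) q.2 =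
      ∑ p ∈ antidiagonal n, ((p.1 : K) + 1) • gaussBinom tt k (p.1 + 1) • Y (p.1 + 1) p.2 := by
  rw [Nat.sum_antidiagonal_antidiagonal_assoc n
    fun i l u ↦ (macRatio k (i + 1) * gaussBinom tt k l) • Y (l + i + 1) u]
  refine sum_congr rfl fun p _ ↦ ?_
  rw [smul_smul, succ_mul_gaussBinom_succ not_isOfFinOrder_tt, sum_smul]
  refine sum_congr rfl fun q hq ↦ ?_
  rw [add_comm q.2, HasAntidiagonal.mem_antidiagonal.1 hq]
  rfl

variable {k : ℕ} (hk : 1 ≤ k) {adj : ℤ → Module.End K SymFun}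
  (hadj : ∀ j, IsAdjointPair (macdonaldForm k) (macdonaldForm k) (adj j)
    (Algebra.lmul K SymFun (hZ j)))
include hk hadj

theorem adj_zero_eq_one : adj 0 = 1 :=
  (hadj 0).eq_of_separatingLeft (macdonaldForm_separatingLeft hk) <| by
    rw [hZ_zero, map_one]
    exact isAdjointPair_one (B := macdonaldForm k)

theorem adj_succ_newton (n : ℕ) (f : SymFun) :
    ((n : K) + 1) • adj (n + 1 : ℕ) f = ∑ p ∈ antidiagonal n, pVarAdjoint k p.1 (adj p.2 f) := by
  have hmul : ∑ p ∈ antidiagonal n, hSym p.2 * pVar p.1 = ((n : K) + 1) • hZ (n + 1 : ℕ) := by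
    rw [hZ_natCast, hSym_succ_newton]
    exact sum_congr rfl fun p _ ↦ mul_comm _ _
  have hL : IsAdjointPair (macdonaldForm k) (macdonaldForm k)
      (((n : K) + 1) • adj (n + 1 : ℕ) : Module.End K SymFun)
      (Algebra.lmul K SymFun (∑ p ∈ antidiagonal n, hSym p.2 * pVar p.1)) := by
    rw [hmul, map_smul]
    exact (hadj _).smul _
  have hR : IsAdjointPair (macdonaldForm k) (macdonaldForm k)
      (∑ p ∈ antidiagonal n, pVarAdjoint k p.1 * adj p.2 : Module.End K SymFun)
      (Algebra.lmul K SymFun (∑ p ∈ antidiagonal n, hSym p.2 * pVar p.1)) := by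
    rw [map_sum]
    refine IsAdjointPair.sum _ fun p _ ↦ ?_
    rw [map_mul, ← hZ_natCast]
    exact (isAdjointPair_pVarAdjoint k p.1).mul (hadj p.2)
  rw [← LinearMap.smul_apply, hL.eq_of_separatingLeft (macdonaldForm_separatingLeft hk) hR,
    LinearMap.sum_apply]
  rfl

theorem sum_antidiagonal_smul_mul_pVarAdjoint_adj (c : ℕ → K) (Z : ℕ → SymFun) (n : ℕ)
    (f : SymFun) :
    ∑ p ∈ antidiagonal n, ∑ q ∈ antidiagonal p.2, c q.1 • (Z q.1 * pVarAdjoint k p.1 (adj q.2 f)) =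
      ∑ p ∈ antidiagonal n, ((p.2 : K) + 1) • c p.1 • (Z p.1 * adj (p.2 + 1 : ℕ) f) := by
  rw [Nat.sum_antidiagonal_antidiagonal_comm n
    fun i l u ↦ c l • (Z l * pVarAdjoint k i (adj u f))]
  refine sum_congr rfl fun p _ ↦ ?_
  rw [← smul_sum, ← mul_sum, ← adj_succ_newton hk hadj, mul_smul_comm, smul_comm]

theorem adj_hZ_mul (n : ℕ) (m : ℤ) (f : SymFun) :
    adj n (hZ m * f) = ∑ p ∈ antidiagonal n, gaussBinom tt k p.1 • (hZ (m - p.1) * adj p.2 f) := by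
  induction n using Nat.strong_induction_on with
  | _ n ih =>
  cases n with
  | zero => simp [adj_zero_eq_one hk hadj, gaussBinom_zero_right]
  | succ n =>
    have hn : (n : K) + 1 ≠ 0 := by exact_mod_cast n.succ_ne_zero
    set g := gaussBinom tt k
    set Y : ℕ → ℕ → SymFun := fun l r ↦ hZ (m - l) * adj r f
    refine smul_right_injective SymFun hn ?_
    calc ((n : K) + 1) • adj (n + 1 : ℕ) (hZ m * f)
        = ∑ p ∈ antidiagonal n, ∑ q ∈ antidiagonal p.2,
            g q.1 • pVarAdjoint k p.1 (hZ (m - q.1) * adj q.2 f) := by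
          rw [adj_succ_newton hk hadj]
          refine sum_congr rfl fun p hp ↦ ?_
          rw [ih p.2 (by have := HasAntidiagonal.mem_antidiagonal.1 hp; omega), map_sum]
          simp only [map_smul]
      _ = ∑ p ∈ antidiagonal n, ((p.1 : K) + 1) • g (p.1 + 1) • Y (p.1 + 1) p.2 +
            ∑ p ∈ antidiagonal n, ((p.2 : K) + 1) • g p.1 • Y p.1 (p.2 + 1) := by
          rw [← sum_antidiagonal_macRatio_mul_gaussBinom_smul k n Y,
            ← sum_antidiagonal_smul_mul_pVarAdjoint_adj hk hadj g (fun l ↦ hZ (m - l)) n f,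
            ← sum_add_distrib]
          refine sum_congr rfl fun p _ ↦ ?_
          rw [← sum_add_distrib]
          refine sum_congr rfl fun q _ ↦ ?_
          rw [pVarAdjoint_hZ_mul, smul_add, smul_smul, mul_comm (g q.1)]
          congr 4
          push_cast
          ring
      _ = ((n : K) + 1) • ∑ p ∈ antidiagonal (n + 1), g p.1 • Y p.1 p.2 :=
          (Nat.add_one_smul_sum_antidiagonal_succ n fun p ↦ g p.1 • Y p.1 p.2).symm

end SymFun

/-- The operator identity
`h_n^* ∘ (h_m ⬝ −) = ∑_{l ≥ 0} binom(k+l-1,l)_t ⬝ (h_{m-l} ⬝ −) ∘ h_{n-l}^*`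
on `Λ_{t^k,t}`, where `h_j^*` (here `adj j`) is the adjoint of multiplication by
`h_j` with respect to the Macdonald inner product at `q = t^k`, `h_j = 0` for
`j < 0`, and `binom(k+l-1,l)_t = ∏_{i=1}^l (1-t^{k+i-1})/(1-t^i)` is the
Gaussian binomial coefficient.  (Terms with `l > min m n` vanish, so the sum is
truncated at `min m n`.) -/
theorem h_commutation_relation (k : ℕ) (hk : 1 ≤ k) (m n : ℕ)
    (adj : ℤ → SymFun →ₗ[K] SymFun)
    (hadj : ∀ (j : ℤ) (g h : SymFun),
      macForm (tt ^ k) tt (adj j g) h = macForm (tt ^ k) tt g (hZ j * h)) :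
    ∀ f : SymFun,
      adj n (hSym m * f)
        = ∑ l ∈ Finset.range (min m n + 1),
            (∏ i ∈ Finset.range l, (1 - tt ^ (k + i)) / (1 - tt ^ (i + 1))) •
              (hZ ((m : ℤ) - l) * adj ((n : ℤ) - l) f) := by
  intro f
  have hadjoint (j : ℤ) : LinearMap.IsAdjointPair (SymFun.macdonaldForm k)
      (SymFun.macdonaldForm k) (adj j) (Algebra.lmul K SymFun (hZ j)) := fun g h ↦ by
    simpa [← SymFun.macForm_eq_macdonaldForm] using hadj j g h
  rw [← SymFun.hZ_natCast, SymFun.adj_hZ_mul hk hadjoint,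
    Finset.Nat.sum_antidiagonal_eq_sum_range_succ
      (fun l r ↦ gaussBinom tt k l • (hZ (m - l) * adj r f)),
    ← Finset.sum_subset (Finset.range_subset_range.2 (by omega : min m n + 1 ≤ n + 1))]
  · refine Finset.sum_congr rfl fun l hl ↦ ?_
    rw [Nat.cast_sub (by simp at hl; omega)]
    rfl
  · intro l hln hlm
    rw [SymFun.hZ_of_neg (by simp at hln hlm; omega), zero_mul, smul_zero]

end
end

section
/- Let p^λ denote multiplication by the Schur function s_λ on Λ with the Hermitian form ⟨·,·⟩_k (defined by ⟨p_μ,p_ν⟩_k = δ_{μν} z(μ) ∏_i (t^{(1-k)μ_i} + t^{(3-k)μ_i} + ⋯ + t^{(k-1)μ_i})), and let q^λ be its adjoint. Then q^{(n)} ∘ p^{(m)} = Σ_{l ≥ 0} binom(k+l-1, l)_t · p^{(m-l)} ∘ q^{(n-l)}, where binom(k+l-1,l)_t is the balanced quantum binomial coefficient ∏_{i=1}^l (t^{k+l-i}-t^{-(k+l-i)})/(t^i - t^{-i}). -/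
open MvPolynomial

noncomputable section

/-- The (weighted) degree of `p_μ`, i.e. `|μ| = ∑_j j ⬝ d j`. -/
def wdeg (d : ℕ+ →₀ ℕ) : ℕ := d.sum fun j m => (j : ℕ) * m

/-- `z(μ) ∏_i (t^{(1-k)μ_i} + t^{(3-k)μ_i} + ⋯ + t^{(k-1)μ_i})`. -/
def hermWeight (k : ℕ) (d : ℕ+ →₀ ℕ) : K :=
  (zPart d : K) *
    d.prod fun j m =>
      (∑ s ∈ Finset.range k, tt ^ ((2 * (s : ℤ) + 1 - (k : ℤ)) * (j : ℕ))) ^ m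

/-- The principal specialization sending `p_j` to
`(t^{1-k})^j + (t^{3-k})^j + ⋯ + (t^{k-1})^j`, i.e. evaluation of a symmetric
function at the `k` variables `t^{1-k}, t^{3-k}, …, t^{k-1}`. -/
def principalEval (k : ℕ) : SymFun →ₐ[K] K :=
  aeval fun j : ℕ+ =>
    ∑ s ∈ Finset.range k, tt ^ ((2 * (s : ℤ) + 1 - (k : ℤ)) * (j : ℕ))

/-- The bilinear form `⟨f,g⟩_k` of the paper, on elements with `t`-free
coefficients (such as Schur functions); on the power-sum basis it is
`⟨p_μ,p_ν⟩_k = δ_{μν} z(μ) ∏_i (t^{(1-k)μ_i} + t^{(3-k)μ_i} + ⋯ + t^{(k-1)μ_i})`. -/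
def hermFormB (k : ℕ) (f g : SymFun) : K :=
  ∑ d ∈ f.support ∪ g.support, coeff d f * coeff d g * hermWeight k d

/-!
The form `⟨·,·⟩_k` is diagonal in the power-sum monomials with nonzero weights, so an
operator is determined by its pairings. The weights give that the adjoint of multiplication by
`p_j` is `j a_j ∂/∂p_j`, where `a_j` is the principal specialization of `p_j`. Newton's identity
`c h_c = ∑ p_{i+1} h_{c-1-i}` then turns into `c q^{(c)} = ∑ (p_{i+1})^* q^{(c-1-i)}`, and since
`j ∂h_c/∂p_j = h_{c-j}`, the Leibniz rule and induction on `n` give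
`q^{(n)} p^{(m)} = ∑_l h_l(a) p^{(m-l)} q^{(n-l)}`, the coefficients `h_l(a)` obeying the same
Newton recursion. Finally `h_l(a) = h_l(t^{1-k}, t^{3-k}, …, t^{k-1})`; adding the variable
`t^k` to the set `t⁻¹ {t^{1-k}, …, t^{k-1}}` gives the `t`-Pascal recursion in `k` satisfied by
the balanced binomials.
-/

lemma tt_ne_zero : tt ≠ 0 := RatFunc.X_ne_zero

lemma tt_pow_ne_one {n : ℕ} (hn : n ≠ 0) : tt ^ n ≠ 1 := by
  intro h
  have h' := congrArg RatFunc.intDegree h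
  rw [tt, ← RatFunc.algebraMap_X, ← map_pow, RatFunc.intDegree_polynomial,
    Polynomial.natDegree_X_pow, RatFunc.intDegree_one] at h'
  omega

/-- Up to the factor `t - t⁻¹`, the balanced quantum integer `[a]_t`. -/
def qBracket (a : ℤ) : K := tt ^ a - tt ^ (-a)

lemma qBracket_ne_zero {a : ℤ} (ha : a ≠ 0) : qBracket a ≠ 0 := by
  have hsplit : qBracket a = tt ^ (-a) * (tt ^ (2 * a) - 1) := by
    rw [qBracket, mul_sub, ← zpow_add₀ tt_ne_zero]
    ring_nf
  rw [hsplit, mul_ne_zero_iff, sub_ne_zero]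
  refine ⟨zpow_ne_zero _ tt_ne_zero, fun h => tt_pow_ne_one (n := (2 * a).natAbs) (by omega) ?_⟩
  rcases Int.natAbs_eq (2 * a) with h2 | h2
  · rwa [h2] at h
  · rw [h2, zpow_neg, inv_eq_one] at h; exact_mod_cast h

def principalPowerSum (k j : ℕ) : K :=
  ∑ s ∈ Finset.range k, tt ^ ((2 * (s : ℤ) + 1 - k) * j)

lemma principalEval_eq_aeval (k : ℕ) :
    principalEval k = aeval fun j : ℕ+ => principalPowerSum k j := rfl

lemma principalPowerSum_ne_zero {k : ℕ} (hk : 0 < k) (j : ℕ) : principalPowerSum k j ≠ 0 := by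
  have hpoly : principalPowerSum k j = tt ^ ((1 - (k : ℤ)) * j) *
      algebraMap (Polynomial ℂ) K (∑ s ∈ Finset.range k, Polynomial.X ^ (2 * s * j)) := by
    rw [map_sum, Finset.mul_sum]
    refine Finset.sum_congr rfl fun s _ => ?_
    rw [map_pow, RatFunc.algebraMap_X, ← tt, ← zpow_natCast, ← zpow_add₀ tt_ne_zero]
    push_cast
    ring_nf
  have heval : (∑ s ∈ Finset.range k, Polynomial.X ^ (2 * s * j) : Polynomial ℂ).eval 1 ≠ 0 := by
    simpa [Polynomial.eval_finsetSum] using hk.ne'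
  rw [hpoly]
  exact mul_ne_zero (zpow_ne_zero _ tt_ne_zero)
    ((map_ne_zero_iff _ (RatFunc.algebraMap_injective ℂ)).mpr fun h => heval (by rw [h]; simp))

lemma principalPowerSum_one (j : ℕ) : principalPowerSum 1 j = 1 := by
  simp [principalPowerSum]

lemma principalPowerSum_succ (k j : ℕ) :
    principalPowerSum (k + 1) j = (tt ^ (k : ℤ)) ^ j + tt⁻¹ ^ j * principalPowerSum k j := by
  rw [principalPowerSum, Finset.sum_range_succ, add_comm, principalPowerSum, Finset.mul_sum]
  congr 1
  · rw [← zpow_natCast, ← zpow_mul]; push_cast; ring_nf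
  · refine Finset.sum_congr rfl fun s _ => ?_
    rw [inv_pow, ← zpow_natCast, ← zpow_neg, ← zpow_add₀ tt_ne_zero]
    push_cast
    ring_nf

lemma hermWeight_ne_zero {k : ℕ} (hk : 0 < k) (d : ℕ+ →₀ ℕ) : hermWeight k d ≠ 0 := by
  refine mul_ne_zero ?_ (Finset.prod_ne_zero_iff.mpr fun j _ =>
    pow_ne_zero _ (principalPowerSum_ne_zero hk j))
  exact Nat.cast_ne_zero.mpr <| Finset.prod_ne_zero_iff.mpr fun j _ =>
    Nat.mul_ne_zero (Nat.factorial_ne_zero _) (pow_ne_zero _ j.ne_zero)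

lemma hermWeight_add_single (k : ℕ) (e : ℕ+ →₀ ℕ) (j : ℕ+) :
    hermWeight k (e + Finsupp.single j 1)
      = hermWeight k e * ((e j + 1) * j * principalPowerSum k j) := by
  have herase : (e + Finsupp.single j 1).erase j = e.erase j := by
    rw [Finsupp.erase_add, Finsupp.erase_single, add_zero]
  simp only [hermWeight, zPart]
  rw [← Finsupp.mul_prod_erase' (e + _) j _ (by simp), ← Finsupp.mul_prod_erase' e j _ (by simp),
    ← Finsupp.mul_prod_erase' (e + _) j _ (by simp), ← Finsupp.mul_prod_erase' e j _ (by simp),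
    herase, Finsupp.add_apply, Finsupp.single_eq_same]
  push_cast [Nat.factorial_succ, pow_succ]
  rw [principalPowerSum]
  ring

section HermForm

variable (k : ℕ)

lemma hermFormB_eq_sum_of_support_subset {f : SymFun} (g : SymFun) {S : Finset (ℕ+ →₀ ℕ)}
    (hS : f.support ⊆ S) :
    hermFormB k f g = ∑ d ∈ S, coeff d f * coeff d g * hermWeight k d := by
  have hvanish : ∀ d ∉ f.support, coeff d f * coeff d g * hermWeight k d = 0 := fun d hd => by
    rw [notMem_support_iff.mp hd, zero_mul, zero_mul]
  rw [hermFormB, ← Finset.sum_subset Finset.subset_union_left fun d _ => hvanish d,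
    Finset.sum_subset hS fun d _ => hvanish d]

lemma hermFormB_comm (f g : SymFun) : hermFormB k f g = hermFormB k g f := by
  simp only [hermFormB, Finset.union_comm f.support, mul_comm (coeff _ f)]

lemma hermFormB_add_left (f g h : SymFun) :
    hermFormB k (f + g) h = hermFormB k f h + hermFormB k g h := by
  classical
  rw [hermFormB_eq_sum_of_support_subset k h support_add,
    hermFormB_eq_sum_of_support_subset k h Finset.subset_union_left,
    hermFormB_eq_sum_of_support_subset k h Finset.subset_union_right, ← Finset.sum_add_distrib]
  simp only [coeff_add, add_mul]

lemma hermFormB_smul_left (c : K) (f g : SymFun) :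
    hermFormB k (c • f) g = c * hermFormB k f g := by
  rw [hermFormB_eq_sum_of_support_subset k g support_smul,
    hermFormB_eq_sum_of_support_subset k g subset_rfl, Finset.mul_sum]
  simp only [coeff_smul, smul_eq_mul, mul_assoc]

def hermBilin : LinearMap.BilinForm K SymFun :=
  LinearMap.mk₂ K (hermFormB k) (hermFormB_add_left k) (hermFormB_smul_left k)
    (fun f g h => by simp only [hermFormB_comm k f, hermFormB_add_left])
    (fun c f g => by simp only [hermFormB_comm k f, hermFormB_smul_left, smul_eq_mul])

lemma hermBilin_apply (f g : SymFun) : hermBilin k f g = hermFormB k f g := rfl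

lemma hermFormB_monomial_one (f : SymFun) (d : ℕ+ →₀ ℕ) :
    hermFormB k f (monomial d 1) = coeff d f * hermWeight k d := by
  classical
  rw [hermFormB_comm, hermFormB_eq_sum_of_support_subset k f support_monomial_subset,
    Finset.sum_singleton, coeff_monomial, if_pos rfl, one_mul]

variable {k} in
lemma eq_of_forall_hermFormB_eq (hk : 0 < k) {f g : SymFun}
    (h : ∀ u, hermFormB k f u = hermFormB k g u) : f = g := by
  ext d
  have hd := h (monomial d 1)
  rw [hermFormB_monomial_one, hermFormB_monomial_one] at hd
  exact mul_right_cancel₀ (hermWeight_ne_zero hk d) hd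

def pAdj (j : ℕ+) : SymFun →ₗ[K] SymFun :=
  ((j : K) * principalPowerSum k j) • (pderiv j).toLinearMap

lemma pAdj_apply (j : ℕ+) (f : SymFun) :
    pAdj k j f = ((j : K) * principalPowerSum k j) • pderiv j f := rfl

lemma hermFormB_pAdj (j : ℕ+) (f g : SymFun) :
    hermFormB k (pAdj k j f) g = hermFormB k f (X j * g) := by
  simp only [← hermBilin_apply]
  induction g using MvPolynomial.induction_on' with
  | add g g' hg hg' => rw [map_add, hg, hg', mul_add, map_add]
  | monomial e c =>
    rw [← mul_one c, ← smul_eq_mul, ← smul_monomial, mul_smul_comm, map_smul, map_smul,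
      X, monomial_mul, one_mul, hermBilin_apply, hermBilin_apply, hermFormB_monomial_one,
      hermFormB_monomial_one, pAdj_apply, coeff_smul, coeff_pderiv, add_comm (Finsupp.single j 1),
      hermWeight_add_single, smul_eq_mul]
    ring

end HermForm

lemma pVar_eq (i : ℕ) : pVar i = X i.succPNat := rfl

lemma hZ_natCast (n : ℕ) : hZ n = hSym n := by
  rw [hZ, if_pos n.cast_nonneg, Int.toNat_natCast]

lemma hZ_of_neg {c : ℤ} (hc : c < 0) : hZ c = 0 := if_neg hc.not_ge

lemma hSym_zero : hSym 0 = 1 := by rw [hSym]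

lemma hZ_zero : hZ 0 = 1 := by rw [← Nat.cast_zero, hZ_natCast, hSym_zero]

lemma succ_smul_hSym_succ (n : ℕ) :
    ((n : K) + 1) • hSym (n + 1) = ∑ i ∈ Finset.range (n + 1), pVar i * hSym (n - i) := by
  rw [hSym, smul_smul, mul_inv_cancel₀ n.cast_add_one_ne_zero, one_smul]

lemma sum_pVar_mul_hZ (N : ℕ) {c : ℤ} (hc : c ≤ N + 1) :
    ∑ i ∈ Finset.range (N + 1), pVar i * hZ (c - 1 - i) = (c : K) • hZ c := by
  obtain hc0 | ⟨n, rfl⟩ : c ≤ 0 ∨ ∃ n : ℕ, c = n + 1 :=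
    (le_or_gt c 0).imp_right fun h => ⟨(c - 1).toNat, by omega⟩
  · rw [Finset.sum_eq_zero fun i _ => by rw [hZ_of_neg (by omega), mul_zero]]
    rcases hc0.lt_or_eq with hneg | rfl
    · rw [hZ_of_neg hneg, smul_zero]
    · rw [Int.cast_zero, zero_smul]
  · have hvanish : ∀ i ∈ Finset.range (N + 1), i ∉ Finset.range (n + 1) →
        pVar i * hZ (n + 1 - 1 - i) = 0 := fun i _ hi => by
      rw [hZ_of_neg (by simp at hi; omega), mul_zero]
    have hrhs : ((n + 1 : ℤ) : K) • hZ (n + 1) = ((n : K) + 1) • hSym (n + 1) := by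
      rw [← Nat.cast_add_one, hZ_natCast]; push_cast; rfl
    rw [← Finset.sum_subset (Finset.range_subset_range.mpr (by omega)) hvanish, hrhs,
      succ_smul_hSym_succ]
    refine Finset.sum_congr rfl fun i hi => ?_
    rw [show (n : ℤ) + 1 - 1 - i = (n - i : ℕ) by simp at hi; omega, hZ_natCast]

lemma sum_pderiv_pVar_mul_hSym (j : ℕ+) (n : ℕ) :
    ∑ i ∈ Finset.range (n + 1), pderiv j (pVar i) * hSym (n - i) = hZ (n + 1 - j) := by
  have hne : ∀ i, i ≠ j.natPred → pderiv j (pVar i) = 0 := fun i hi =>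
    pderiv_X_of_ne fun h => hi (by subst h; rfl)
  by_cases hj : (j : ℕ) ≤ n + 1
  · rw [Finset.sum_eq_single j.natPred (fun i _ hi => by rw [hne i hi, zero_mul])
      (fun h => absurd (Finset.mem_range.mpr (by rw [PNat.natPred]; omega)) h), pVar_eq,
      PNat.succPNat_natPred, pderiv_X_self, one_mul, ← hZ_natCast]
    have := j.pos
    congr 1
    rw [PNat.natPred]
    omega
  · rw [hZ_of_neg (by omega)]
    exact Finset.sum_eq_zero fun i hi => by
      rw [hne i (by simp at hi; rw [PNat.natPred]; omega), zero_mul]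

lemma smul_pderiv_hZ (j : ℕ+) (c : ℤ) : (j : K) • pderiv j (hZ c) = hZ (c - j) := by
  rcases lt_or_ge c 0 with hneg | hc0
  · rw [hZ_of_neg hneg, hZ_of_neg (by omega), map_zero, smul_zero]
  lift c to ℕ using hc0 with n
  induction n using Nat.strong_induction_on with
  | _ n ih =>
  rcases n with _ | n
  · rw [Nat.cast_zero, hZ_zero, Derivation.map_one_eq_zero, smul_zero, hZ_of_neg (by simp)]
  have hnewton : ∑ i ∈ Finset.range (n + 1), pVar i * ((j : K) • pderiv j (hSym (n - i)))
      = ((n + 1 - j : ℤ) : K) • hZ (n + 1 - j) := by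
    rw [← sum_pVar_mul_hZ n (by omega)]
    refine Finset.sum_congr rfl fun i hi => ?_
    rw [← hZ_natCast, ih (n - i) (by simp at hi; omega)]
    congr 2
    simp at hi
    omega
  refine smul_right_injective SymFun (n.cast_add_one_ne_zero : (n : K) + 1 ≠ 0) ?_
  dsimp only
  calc ((n : K) + 1) • (j : K) • pderiv j (hZ (n + 1 : ℕ))
      = (j : K) • pderiv j (((n : K) + 1) • hSym (n + 1)) := by
        rw [hZ_natCast, smul_comm, Derivation.map_smul]
    _ = ∑ i ∈ Finset.range (n + 1), ((j : K) • (pderiv j (pVar i) * hSym (n - i))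
          + pVar i * ((j : K) • pderiv j (hSym (n - i)))) := by
        rw [succ_smul_hSym_succ, map_sum, Finset.smul_sum]
        refine Finset.sum_congr rfl fun i _ => ?_
        rw [Derivation.leibniz, smul_add, add_comm, smul_eq_mul, smul_eq_mul, mul_comm,
          mul_smul_comm]
    _ = ((n : K) + 1) • hZ ((n + 1 : ℕ) - j) := by
        rw [Finset.sum_add_distrib, ← Finset.smul_sum, sum_pderiv_pVar_mul_hSym, hnewton,
          ← add_smul]
        push_cast
        ring_nf

lemma pAdj_hZ_mul (k : ℕ) (j : ℕ+) (c : ℤ) (f : SymFun) :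
    pAdj k j (hZ c * f) = hZ c * pAdj k j f + principalPowerSum k j • (hZ (c - j) * f) := by
  rw [pAdj_apply, pAdj_apply, Derivation.leibniz, ← smul_pderiv_hZ, smul_eq_mul, smul_eq_mul,
    mul_comm f, mul_smul_comm, smul_mul_assoc, smul_add, smul_smul,
    mul_comm (principalPowerSum k j)]

lemma Finset.sum_range_sum_range_eq_sum_range_diag {M : Type*} [AddCommMonoid M] (n : ℕ)
    {G : ℕ → ℕ → M} (hG : ∀ i l, n ≤ i + l → G i l = 0) :
    ∑ i ∈ Finset.range n, ∑ l ∈ Finset.range n, G i l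
      = ∑ r ∈ Finset.range n, ∑ i ∈ Finset.range (r + 1), G i (r - i) := by
  rw [Finset.sum_range_diag_flip]
  refine Finset.sum_congr rfl fun i hi => (Finset.sum_subset (Finset.range_subset_range.mpr
    (Nat.sub_le n i)) fun l _ hl => hG i l ?_).symm
  simp only [Finset.mem_range] at hi hl
  omega

section Evaluation

variable (w : ℕ+ → K)

lemma aeval_hSym_succ (n : ℕ) :
    ((n : K) + 1) * aeval w (hSym (n + 1))
      = ∑ i ∈ Finset.range (n + 1), w i.succPNat * aeval w (hSym (n - i)) := by
  have h := congrArg (aeval w) (succ_smul_hSym_succ n)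
  rw [map_smul, map_sum, Algebra.smul_def] at h
  simpa only [map_add, map_natCast, map_one, map_mul, pVar_eq, aeval_X] using h

lemma sum_mul_aeval_hZ (N : ℕ) {c : ℤ} (hc : c ≤ N + 1) :
    ∑ i ∈ Finset.range (N + 1), w i.succPNat * aeval w (hZ (c - 1 - i)) = c * aeval w (hZ c) := by
  have h := congrArg (aeval w) (sum_pVar_mul_hZ N hc)
  rw [map_smul, map_sum, Algebra.smul_def] at h
  simpa only [map_intCast, map_mul, pVar_eq, aeval_X] using h

/-- Newton's identity for `aeval w (hSym ·)`, convolved with a sequence supported on `ℕ`. -/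
lemma sum_sum_mul_aeval_hSym_smul {M : Type*} [AddCommGroup M] [Module K M] {F : ℤ → M}
    (hF : ∀ c < 0, F c = 0) {ν N : ℕ} (hν : ν ≤ N) :
    ∑ i ∈ Finset.range (N + 1), ∑ l ∈ Finset.range (N + 1),
        (w i.succPNat * aeval w (hSym l)) • F (ν - i - l)
      = ∑ l ∈ Finset.range (N + 2), ((l : K) * aeval w (hSym l)) • F (ν + 1 - l) := by
  rw [Finset.sum_range_sum_range_eq_sum_range_diag _ fun i l hil => by
      rw [hF _ (by omega), smul_zero]]
  conv_rhs => rw [Finset.sum_range_succ', Nat.cast_zero, zero_mul, zero_smul, add_zero]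
  refine Finset.sum_congr rfl fun r _ => ?_
  rw [Nat.cast_succ, aeval_hSym_succ, Finset.sum_smul]
  refine Finset.sum_congr rfl fun i hi => ?_
  congr 2
  simp only [Finset.mem_range] at hi
  push_cast
  omega

lemma aeval_add_hZ (v : ℕ+ → K) {N : ℕ} {c : ℤ} (hc : c ≤ N) :
    aeval (w + v) (hZ c)
      = ∑ j ∈ Finset.range (N + 1), aeval w (hSym j) * aeval v (hZ (c - j)) := by
  have hvanish : ∀ {c : ℤ}, c < 0 →
      ∑ j ∈ Finset.range (N + 1), aeval w (hSym j) * aeval v (hZ (c - j)) = 0 := fun hc =>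
    Finset.sum_eq_zero fun j _ => by rw [hZ_of_neg (by omega), map_zero, mul_zero]
  rcases lt_or_ge c 0 with hneg | hc0
  · rw [hZ_of_neg hneg, map_zero, hvanish hneg]
  lift c to ℕ using hc0 with n
  induction n using Nat.strong_induction_on with
  | _ n ih =>
  rcases n with _ | n
  · rw [Finset.sum_eq_single 0 (fun j _ hj => by rw [hZ_of_neg (by omega), map_zero, mul_zero])
      (by simp)]
    simp [hZ_zero, hSym_zero]
  have ih' : ∀ i : ℕ, aeval (w + v) (hZ (n - i)) = ∑ j ∈ Finset.range (N + 1),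
      aeval w (hSym j) * aeval v (hZ (n - i - j)) := fun i => by
    obtain hneg | hi : (n : ℤ) - i < 0 ∨ i ≤ n := by omega
    · rw [hZ_of_neg hneg, map_zero, hvanish hneg]
    · rw [show (n : ℤ) - i = (n - i : ℕ) by omega, ih _ (by omega) (by omega)]
  have hsplit : ∑ i ∈ Finset.range (N + 1), (w + v) i.succPNat * aeval (w + v) (hZ (n - i))
      = ∑ i ∈ Finset.range (N + 1), ∑ j ∈ Finset.range (N + 1),
          (w i.succPNat * aeval w (hSym j)) • aeval v (hZ (n - i - j))
        + ∑ j ∈ Finset.range (N + 1), aeval w (hSym j) *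
          ∑ i ∈ Finset.range (N + 1), v i.succPNat * aeval v (hZ ((n + 1 - j) - 1 - i)) := by
    simp only [ih', Pi.add_apply, add_mul, Finset.sum_add_distrib, Finset.mul_sum, smul_eq_mul]
    congr 1
    · simp only [mul_assoc]
    · rw [Finset.sum_comm]
      refine Finset.sum_congr rfl fun j _ => Finset.sum_congr rfl fun i _ => ?_
      rw [show (n : ℤ) + 1 - j - 1 - i = n - i - j by ring]
      ring
  have hconv := sum_sum_mul_aeval_hSym_smul w (F := fun c => aeval v (hZ c))
    (fun c hc => by rw [hZ_of_neg hc, map_zero]) (by omega : n ≤ N)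
  apply mul_left_cancel₀ (n.cast_add_one_ne_zero : (n : K) + 1 ≠ 0)
  have hnewton := sum_mul_aeval_hZ (w + v) N (c := n + 1) (by omega)
  simp only [Int.cast_add, Int.cast_natCast, Int.cast_one, add_sub_cancel_right] at hnewton
  rw [Nat.cast_succ, ← hnewton, hsplit, hconv, Finset.sum_range_succ,
    hZ_of_neg (by omega), map_zero, smul_zero, add_zero, Finset.mul_sum, ← Finset.sum_add_distrib]
  refine Finset.sum_congr rfl fun j hj => ?_
  rw [sum_mul_aeval_hZ v N (by omega), smul_eq_mul]
  push_cast
  ring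

lemma aeval_add_hSym (v : ℕ+ → K) (l : ℕ) :
    aeval (w + v) (hSym l)
      = ∑ j ∈ Finset.range (l + 1), aeval w (hSym j) * aeval v (hSym (l - j)) := by
  rw [← hZ_natCast, aeval_add_hZ w v le_rfl]
  refine Finset.sum_congr rfl fun j hj => ?_
  rw [show (l : ℤ) - j = (l - j : ℕ) by simp at hj; omega, hZ_natCast]

lemma aeval_pow_mul_hSym (u : K) (l : ℕ) :
    aeval (fun j : ℕ+ => u ^ (j : ℕ) * w j) (hSym l) = u ^ l * aeval w (hSym l) := by
  induction l using Nat.strong_induction_on with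
  | _ l ih =>
  rcases l with _ | l
  · simp [hSym_zero]
  apply mul_left_cancel₀ (l.cast_add_one_ne_zero : (l : K) + 1 ≠ 0)
  rw [aeval_hSym_succ, mul_left_comm, aeval_hSym_succ, Finset.mul_sum]
  refine Finset.sum_congr rfl fun i hi => ?_
  have hpow : u ^ (l + 1) = u ^ (i + 1) * u ^ (l - i) := by
    rw [← pow_add]; congr 1; simp at hi; omega
  rw [ih _ (by omega), Nat.succPNat_coe, Nat.succ_eq_add_one, hpow]
  ring

lemma aeval_pow_hSym (u : K) (l : ℕ) : aeval (fun j : ℕ+ => u ^ (j : ℕ)) (hSym l) = u ^ l := by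
  induction l using Nat.strong_induction_on with
  | _ l ih =>
  rcases l with _ | l
  · simp [hSym_zero]
  apply mul_left_cancel₀ (l.cast_add_one_ne_zero : (l : K) + 1 ≠ 0)
  rw [aeval_hSym_succ, Finset.sum_congr rfl fun i hi => by
    rw [ih _ (by simp at hi; omega), Nat.succPNat_coe, ← pow_add,
      show i.succ + (l - i) = l + 1 by simp at hi; omega]]
  simp

end Evaluation

/-- The balanced quantum binomial coefficient `binom(k+l-1, l)_t`. -/
def balancedQBinom (k l : ℕ) : K :=
  ∏ i ∈ Finset.range l, qBracket ((k : ℤ) + l - (i + 1)) / qBracket ((i : ℤ) + 1)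

lemma qBracket_add (a b : ℤ) : qBracket (a + b) = tt ^ (-b) * qBracket a + tt ^ a * qBracket b := by
  simp only [qBracket, mul_sub, ← zpow_add₀ tt_ne_zero]
  ring_nf

lemma balancedQBinom_eq_div (k l : ℕ) :
    balancedQBinom k l
      = (∏ i ∈ Finset.range l, qBracket (k + i)) / ∏ i ∈ Finset.range l, qBracket (i + 1) := by
  rw [balancedQBinom, Finset.prod_div_distrib, ← Finset.prod_range_reflect _ l]
  congr 1
  refine Finset.prod_congr rfl fun i hi => ?_
  rw [Finset.mem_range] at hi
  congr 1
  omega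

lemma balancedQBinom_zero_right (k : ℕ) : balancedQBinom k 0 = 1 := Finset.prod_range_zero _

lemma balancedQBinom_one_left (l : ℕ) : balancedQBinom 1 l = 1 := by
  simp only [balancedQBinom_eq_div, Nat.cast_one, add_comm (1 : ℤ)]
  exact div_self (Finset.prod_ne_zero_iff.mpr fun i _ => qBracket_ne_zero (by omega))

lemma balancedQBinom_succ_succ (k l : ℕ) :
    balancedQBinom (k + 1) (l + 1)
      = tt ^ (-(l + 1 : ℤ)) * balancedQBinom k (l + 1)
        + tt ^ (k : ℤ) * balancedQBinom (k + 1) l := by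
  have hQ : ∏ i ∈ Finset.range l, qBracket ((i : ℤ) + 1) ≠ 0 :=
    Finset.prod_ne_zero_iff.mpr fun i _ => qBracket_ne_zero (by omega)
  have hl : qBracket ((l : ℤ) + 1) ≠ 0 := qBracket_ne_zero (by omega)
  have hshift : ∏ i ∈ Finset.range (l + 1), qBracket ((k : ℤ) + i)
      = qBracket k * ∏ i ∈ Finset.range l, qBracket ((k : ℤ) + 1 + i) := by
    rw [Finset.prod_range_succ', mul_comm]
    simp only [Nat.cast_add, Nat.cast_one, Nat.cast_zero, add_zero, add_assoc, add_comm (1 : ℤ)]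
  simp only [balancedQBinom_eq_div, Nat.cast_add, Nat.cast_one]
  rw [hshift, Finset.prod_range_succ _ l, Finset.prod_range_succ _ l,
    show (k : ℤ) + 1 + l = k + (l + 1) by ring, qBracket_add]
  field_simp

lemma balancedQBinom_succ_left (k l : ℕ) :
    balancedQBinom (k + 1) l
      = ∑ j ∈ Finset.range (l + 1),
          (tt ^ (k : ℤ)) ^ j * (tt⁻¹ ^ (l - j) * balancedQBinom k (l - j)) := by
  induction l with
  | zero => simp [balancedQBinom_zero_right]
  | succ l ih =>
    rw [balancedQBinom_succ_succ, ih, Finset.mul_sum, Finset.sum_range_succ' _ (l + 1), add_comm]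
    congr 1
    · refine Finset.sum_congr rfl fun j hj => ?_
      rw [Finset.mem_range] at hj
      rw [show l + 1 - (j + 1) = l - j by omega]
      ring
    · simp [← zpow_natCast]

lemma principalEval_hSym_succ_left (k l : ℕ) :
    principalEval (k + 1) (hSym l) = ∑ j ∈ Finset.range (l + 1),
      (tt ^ (k : ℤ)) ^ j * (tt⁻¹ ^ (l - j) * principalEval k (hSym (l - j))) := by
  have hsplit : (fun j : ℕ+ => principalPowerSum (k + 1) j)
      = (fun j : ℕ+ => (tt ^ (k : ℤ)) ^ (j : ℕ))
        + fun j : ℕ+ => tt⁻¹ ^ (j : ℕ) * principalPowerSum k j :=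
    funext fun j => principalPowerSum_succ k j
  rw [principalEval_eq_aeval, hsplit, aeval_add_hSym]
  simp only [aeval_pow_hSym, aeval_pow_mul_hSym, principalEval_eq_aeval]

lemma principalEval_hSym {k : ℕ} (hk : 0 < k) (l : ℕ) :
    principalEval k (hSym l) = balancedQBinom k l := by
  induction k, hk using Nat.le_induction generalizing l with
  | base =>
    have hone : principalEval 1 = aeval fun j : ℕ+ => (1 : K) ^ (j : ℕ) := by
      simp only [principalEval_eq_aeval, principalPowerSum_one, one_pow]
    rw [hone, aeval_pow_hSym, one_pow, balancedQBinom_one_left]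
  | succ k _ ih =>
    simp only [principalEval_hSym_succ_left, balancedQBinom_succ_left, ih]

lemma sum_pAdj_sum_smul_hZ_mul (k N : ℕ) (n m : ℤ) (b : ℕ → K) (A : ℤ → SymFun → SymFun)
    (f : SymFun) :
    ∑ i ∈ Finset.range (N + 1), pAdj k i.succPNat
        (∑ l ∈ Finset.range (N + 1), b l • (hZ (m - l) * A (n - i - l) f))
      = ∑ l ∈ Finset.range (N + 1), b l • (hZ (m - l) *
          ∑ i ∈ Finset.range (N + 1), pAdj k i.succPNat (A ((n + 1 - l) - 1 - i) f))
        + ∑ i ∈ Finset.range (N + 1), ∑ l ∈ Finset.range (N + 1),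
          (principalPowerSum k i.succPNat * b l) •
            (hZ (m - n - 1 + (n - i - l)) * A (n - i - l) f) := by
  simp only [map_sum, map_smul, pAdj_hZ_mul, smul_add, Finset.sum_add_distrib]
  congr 1
  · rw [Finset.sum_comm]
    refine Finset.sum_congr rfl fun l _ => ?_
    rw [Finset.mul_sum, Finset.smul_sum]
    refine Finset.sum_congr rfl fun i _ => ?_
    rw [show n + 1 - l - 1 - i = n - i - l by ring]
  · refine Finset.sum_congr rfl fun i _ => Finset.sum_congr rfl fun l _ => ?_
    rw [smul_smul, mul_comm (b l), show m - l - (i.succPNat : ℕ) = m - n - 1 + (n - i - l) by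
      rw [Nat.succPNat_coe]; push_cast; ring]

/-- `adj j` is the paper's `q^{(j)}`, the adjoint of multiplication by `h_j`. -/
def IsAdjointMulH (k : ℕ) (adj : ℤ → SymFun → SymFun) : Prop :=
  ∀ j g h, hermFormB k (adj j g) h = hermFormB k g (hZ j * h)

namespace IsAdjointMulH

variable {k : ℕ} {adj : ℤ → SymFun → SymFun}

lemma apply_of_neg (hk : 0 < k) (hadj : IsAdjointMulH k adj) {c : ℤ} (hc : c < 0)
    (f : SymFun) : adj c f = 0 :=
  eq_of_forall_hermFormB_eq hk fun u => by
    simp only [hadj c, hZ_of_neg hc, zero_mul, ← hermBilin_apply, map_zero, LinearMap.zero_apply]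

lemma apply_zero (hk : 0 < k) (hadj : IsAdjointMulH k adj) (f : SymFun) : adj 0 f = f :=
  eq_of_forall_hermFormB_eq hk fun u => by rw [hadj, hZ_zero, one_mul]

lemma sum_pAdj (hk : 0 < k) (hadj : IsAdjointMulH k adj) (N : ℕ) {c : ℤ} (hc : c ≤ N + 1)
    (f : SymFun) :
    ∑ i ∈ Finset.range (N + 1), pAdj k i.succPNat (adj (c - 1 - i) f) = (c : K) • adj c f := by
  refine eq_of_forall_hermFormB_eq hk fun u => ?_
  calc hermFormB k (∑ i ∈ Finset.range (N + 1), pAdj k i.succPNat (adj (c - 1 - i) f)) u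
      = ∑ i ∈ Finset.range (N + 1), hermBilin k f (pVar i * hZ (c - 1 - i) * u) := by
        rw [← hermBilin_apply, map_sum, LinearMap.sum_apply]
        refine Finset.sum_congr rfl fun i _ => ?_
        rw [hermBilin_apply, hermFormB_pAdj, hadj, hermBilin_apply, pVar_eq, mul_left_comm,
          mul_assoc]
    _ = hermFormB k ((c : K) • adj c f) u := by
      rw [← map_sum, ← Finset.sum_mul, sum_pVar_mul_hZ N hc, smul_mul_assoc, map_smul,
        hermBilin_apply, ← hadj, ← hermBilin_apply, ← hermBilin_apply, map_smul,
        LinearMap.smul_apply]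

lemma apply_hSym_mul (hk : 0 < k) (hadj : IsAdjointMulH k adj) {N : ℕ} {c : ℤ} (hc : c ≤ N)
    (m : ℕ) (f : SymFun) :
    adj c (hSym m * f)
      = ∑ l ∈ Finset.range (N + 1), principalEval k (hSym l) • (hZ (m - l) * adj (c - l) f) := by
  have hvanish : ∀ {c : ℤ}, c < 0 → ∑ l ∈ Finset.range (N + 1),
      principalEval k (hSym l) • (hZ (m - l) * adj (c - l) f) = 0 := fun hc =>
    Finset.sum_eq_zero fun l _ => by rw [hadj.apply_of_neg hk (by omega), mul_zero, smul_zero]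
  rcases lt_or_ge c 0 with hneg | hc0
  · rw [hadj.apply_of_neg hk hneg, hvanish hneg]
  lift c to ℕ using hc0 with n
  induction n using Nat.strong_induction_on with
  | _ n ih =>
  rcases n with _ | n
  · rw [Finset.sum_eq_single 0 (fun l _ hl => by
      rw [hadj.apply_of_neg hk (by omega), mul_zero, smul_zero]) (by simp)]
    simp [hadj.apply_zero hk, hSym_zero, hZ_natCast]
  have ih' : ∀ i : ℕ, adj (n - i) (hSym m * f) = ∑ l ∈ Finset.range (N + 1),
      principalEval k (hSym l) • (hZ (m - l) * adj (n - i - l) f) := fun i => by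
    obtain hneg | hi : (n : ℤ) - i < 0 ∨ i ≤ n := by omega
    · rw [hadj.apply_of_neg hk hneg, hvanish hneg]
    · rw [show (n : ℤ) - i = (n - i : ℕ) by omega, ih _ (by omega) (by omega)]
  have hconv := sum_sum_mul_aeval_hSym_smul (fun j => principalPowerSum k j)
    (F := fun c => hZ (m - n - 1 + c) * adj c f)
    (fun c hc => by rw [hadj.apply_of_neg hk hc, mul_zero]) (by omega : n ≤ N)
  refine smul_right_injective SymFun (n.cast_add_one_ne_zero : (n : K) + 1 ≠ 0) ?_
  dsimp only at hconv ⊢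
  have hstart := hadj.sum_pAdj hk N (c := n + 1) (by omega) (hSym m * f)
  push_cast at hstart ⊢
  simp only [add_sub_cancel_right, ih'] at hstart
  rw [← principalEval_eq_aeval] at hconv
  rw [← hstart, sum_pAdj_sum_smul_hZ_mul, hconv, Finset.sum_range_succ _ (N + 1),
    hadj.apply_of_neg hk (by omega), mul_zero, smul_zero, add_zero, ← Finset.sum_add_distrib,
    Finset.smul_sum]
  refine Finset.sum_congr rfl fun l hl => ?_
  rw [hadj.sum_pAdj hk N (by omega), show (m : ℤ) - n - 1 + (n + 1 - l) = m - l by ring,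
    mul_smul_comm, smul_smul, smul_smul, ← add_smul]
  congr 1
  push_cast
  ring

end IsAdjointMulH

/-- Let `p^{(j)}` be multiplication by `h_j = s_{(j)}` and
`q^{(j)}` (here `adj j`) its adjoint with respect to the form `⟨·,·⟩_k`.  Then
`q^{(n)} ∘ p^{(m)} = ∑_{l ≥ 0} binom(k+l-1,l)_t ⬝ p^{(m-l)} ∘ q^{(n-l)}`, where
`binom(k+l-1,l)_t = ∏_{i=1}^l (t^{k+l-i} - t^{-(k+l-i)})/(t^i - t^{-i})` is the
balanced quantum binomial, with `p^{(j)} = q^{(j)} = 0` for `j < 0`.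
(Terms with `l > min m n` vanish, so the sum is truncated.) -/
theorem balanced_commutation_relation (k : ℕ) (hk : 1 ≤ k) (m n : ℕ)
    (adj : ℤ → SymFun →ₗ[K] SymFun)
    (hadj : ∀ (j : ℤ) (g h : SymFun),
      hermFormB k (adj j g) h = hermFormB k g (hZ j * h)) :
    ∀ f : SymFun,
      adj n (hSym m * f)
        = ∑ l ∈ Finset.range (min m n + 1),
            (∏ i ∈ Finset.range l,
              (tt ^ ((k : ℤ) + l - (i + 1)) - tt ^ (-((k : ℤ) + l - (i + 1)))) /
                (tt ^ ((i : ℤ) + 1) - tt ^ (-((i : ℤ) + 1)))) •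
              (hZ ((m : ℤ) - l) * adj ((n : ℤ) - l) f) := by
  intro f
  have hadj' : IsAdjointMulH k fun j => adj j := hadj
  have hvanish : ∀ l ∈ Finset.range (n + 1), l ∉ Finset.range (min m n + 1) →
      balancedQBinom k l • (hZ ((m : ℤ) - l) * adj ((n : ℤ) - l) f) = 0 := fun l hn hl => by
    rw [hZ_of_neg (by simp at hn hl; omega), zero_mul, smul_zero]
  calc adj n (hSym m * f)
      = ∑ l ∈ Finset.range (n + 1),
          balancedQBinom k l • (hZ ((m : ℤ) - l) * adj ((n : ℤ) - l) f) := by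
        simp only [hadj'.apply_hSym_mul hk le_rfl m f, principalEval_hSym hk]
    _ = _ := (Finset.sum_subset (Finset.range_subset_range.mpr (by omega)) hvanish).symm

end
end
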